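/- arXiv:1903.06642 — 2 statements merged into one kernel-verified Lean document; each statement's English description precedes it below -/
import Mathlib

section
/- For k = 0, 1, 2, ..., let p_k(x) = √((k+1)/π) x^k, and for n ∈ ℕ and x ∈ ℝ define K_n(x) = Σ_{k=0}^n p_k(x)², K01_n(x) = Σ_{k=0}^n p_k(x) p_k'(x), K11_n(x) = Σ_{k=0}^n p_k'(x)², and 𝒦_n(x) = √(K11_n(x) K_n(x) − K01_n(x)²) / K_n(x). Then for every x ∈ ℝ with |x| > 1, the limit as n → ∞ of 𝒦_n(x) equals 1/(x² − 1). -/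
open Finset Real Filter

noncomputable def bergPoly (k : ℕ) (x : ℝ) : ℝ :=
  Real.sqrt ((k + 1) / π) * x ^ k

noncomputable def bergK (n : ℕ) (x : ℝ) : ℝ :=
  ∑ k ∈ Finset.range (n + 1), (bergPoly k x) ^ 2

noncomputable def bergK01 (n : ℕ) (x : ℝ) : ℝ :=
  ∑ k ∈ Finset.range (n + 1), bergPoly k x * deriv (bergPoly k) x

noncomputable def bergK11 (n : ℕ) (x : ℝ) : ℝ :=
  ∑ k ∈ Finset.range (n + 1), (deriv (bergPoly k) x) ^ 2

noncomputable def bergKcal (n : ℕ) (x : ℝ) : ℝ :=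
  Real.sqrt (bergK11 n x * bergK n x - (bergK01 n x) ^ 2) / bergK n x

open Topology

/-!
With `t = x²`, the numbers `π K_n(x)`, `π x K01_n(x)` and `π x² K11_n(x)` are the moments of
order `0, 1, 2` of the weights `(k + 1) tᵏ` on `{0, …, n}` (Euler's identity `x p_k' = k p_k`),
so `x² 𝒦_n(x)²` is the variance of these weights. The variance is unchanged by the reflection
`k ↦ n - k` and by rescaling, which turn the weights into the Cesàro weights
`(1 - i/(n+1)) rⁱ`, `r = 1/t < 1`. Their moments converge to those of the geometric weights
`rⁱ`, whose variance is `r/(1 - r)² = t/(t - 1)²`.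
-/

lemma tsum_sq_mul_geometric_of_norm_lt_one {𝕜 : Type*} [NormedField 𝕜] [CompleteSpace 𝕜]
    {r : 𝕜} (hr : ‖r‖ < 1) :
    ∑' n : ℕ, (n : 𝕜) ^ 2 * r ^ n = r * (1 + r) / (1 - r) ^ 3 := by
  have h1r : 1 - r ≠ 0 := sub_ne_zero.2 fun h => by simp [← h] at hr
  set S := ∑' n : ℕ, (n : 𝕜) ^ 2 * r ^ n
  have hS : HasSum (fun n : ℕ => (n : 𝕜) ^ 2 * r ^ n) S :=
    (summable_pow_mul_geometric_of_norm_lt_one 2 hr).hasSum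
  have hshift := (hasSum_nat_add_iff' 1).2 hS
  have hexpand := ((hS.add ((hasSum_coe_mul_geometric_of_norm_lt_one hr).mul_left 2)).add
    (hasSum_geometric_of_norm_lt_one hr)).mul_left r
  rw [show (fun n : ℕ => ((n + 1 : ℕ) : 𝕜) ^ 2 * r ^ (n + 1))
      = fun n : ℕ => r * ((n : 𝕜) ^ 2 * r ^ n + 2 * (n * r ^ n) + r ^ n) from
    funext fun n => by push_cast; ring] at hshift
  have hS_eq := hshift.unique hexpand
  simp only [range_one, sum_singleton] at hS_eq
  rw [eq_div_iff (pow_ne_zero 3 h1r)]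
  field_simp at hS_eq
  linear_combination hS_eq

noncomputable def partialMoment (w : ℕ → ℝ) (n j : ℕ) : ℝ :=
  ∑ k ∈ range (n + 1), (k : ℝ) ^ j * w k

noncomputable def partialVariance (w : ℕ → ℝ) (n : ℕ) : ℝ :=
  (partialMoment w n 2 * partialMoment w n 0 - partialMoment w n 1 ^ 2) /
    partialMoment w n 0 ^ 2

noncomputable def cesaroWeight (g : ℕ → ℝ) (n i : ℕ) : ℝ :=
  (1 - (i : ℝ) / (n + 1)) * g i

section PartialVariance

variable {v w : ℕ → ℝ} {n : ℕ}

lemma partialVariance_congr (h : ∀ k ≤ n, v k = w k) :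
    partialVariance v n = partialVariance w n := by
  have hm : ∀ j, partialMoment v n j = partialMoment w n j := fun j =>
    sum_congr rfl fun k hk => by rw [h k (Nat.lt_succ_iff.1 (mem_range.1 hk))]
  simp only [partialVariance, hm]

lemma partialVariance_const_mul {c : ℝ} (hc : c ≠ 0) :
    partialVariance (fun k => c * w k) n = partialVariance w n := by
  have hm : ∀ j, partialMoment (fun k => c * w k) n j = c * partialMoment w n j := fun j => by
    simp only [partialMoment, mul_sum]
    exact sum_congr rfl fun k _ => by ring
  simp only [partialVariance, hm]
  rw [show ∀ a b d : ℝ, c * a * (c * b) - (c * d) ^ 2 = c ^ 2 * (a * b - d ^ 2) by intros; ring,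
    mul_pow, mul_div_mul_left _ _ (pow_ne_zero 2 hc)]

lemma partialMoment_reflect (w : ℕ → ℝ) (n j : ℕ) :
    partialMoment (fun i => w (n - i)) n j
      = ∑ k ∈ range (n + 1), ((n : ℝ) - k) ^ j * w k := by
  rw [partialMoment, ← sum_range_reflect]
  refine sum_congr rfl fun k hk => ?_
  have hk : k ≤ n := Nat.lt_succ_iff.1 (mem_range.1 hk)
  rw [Nat.add_sub_cancel, Nat.sub_sub_self hk, Nat.cast_sub hk]

lemma partialVariance_reflect (w : ℕ → ℝ) (n : ℕ) :
    partialVariance (fun i => w (n - i)) n = partialVariance w n := by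
  have h0 : partialMoment (fun i => w (n - i)) n 0 = partialMoment w n 0 := by
    rw [partialMoment_reflect]
    simp only [partialMoment, pow_zero]
  have h1 : partialMoment (fun i => w (n - i)) n 1
      = n * partialMoment w n 0 - partialMoment w n 1 := by
    rw [partialMoment_reflect]
    simp only [partialMoment, mul_sum, ← sum_sub_distrib]
    exact sum_congr rfl fun k _ => by ring
  have h2 : partialMoment (fun i => w (n - i)) n 2
      = n ^ 2 * partialMoment w n 0 - 2 * n * partialMoment w n 1 + partialMoment w n 2 := by
    rw [partialMoment_reflect]
    simp only [partialMoment, mul_sum, ← sum_sub_distrib, ← sum_add_distrib]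
    exact sum_congr rfl fun k _ => by ring
  simp only [partialVariance, h0, h1, h2]
  ring

end PartialVariance

lemma partialMoment_cesaroWeight (g : ℕ → ℝ) (n j : ℕ) :
    partialMoment (cesaroWeight g n) n j
      = partialMoment g n j - partialMoment g n (j + 1) / (n + 1) := by
  simp only [partialMoment, cesaroWeight, sum_div, ← sum_sub_distrib]
  exact sum_congr rfl fun k _ => by ring

lemma tendsto_partialMoment {g : ℕ → ℝ} {j : ℕ}
    (hg : Summable fun i : ℕ => (i : ℝ) ^ j * g i) :
    Tendsto (fun n => partialMoment g n j) atTop (𝓝 (∑' i : ℕ, (i : ℝ) ^ j * g i)) :=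
  hg.hasSum.tendsto_sum_nat.comp (tendsto_add_atTop_nat 1)

lemma tendsto_partialMoment_cesaroWeight {g : ℕ → ℝ} {j : ℕ}
    (hj : Summable fun i : ℕ => (i : ℝ) ^ j * g i)
    (hj' : Summable fun i : ℕ => (i : ℝ) ^ (j + 1) * g i) :
    Tendsto (fun n => partialMoment (cesaroWeight g n) n j) atTop
      (𝓝 (∑' i : ℕ, (i : ℝ) ^ j * g i)) := by
  have hinv : Tendsto (fun n : ℕ => ((n : ℝ) + 1)⁻¹) atTop (𝓝 0) := by
    simpa only [one_div] using tendsto_one_div_add_atTop_nhds_zero_nat (𝕜 := ℝ)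
  simpa only [partialMoment_cesaroWeight, div_eq_mul_inv, mul_zero, sub_zero] using
    (tendsto_partialMoment hj).sub ((tendsto_partialMoment hj').mul hinv)

lemma tendsto_partialVariance_cesaroWeight_geometric {r : ℝ} (hr : ‖r‖ < 1) :
    Tendsto (fun n => partialVariance (cesaroWeight (r ^ ·) n) n) atTop
      (𝓝 (r / (1 - r) ^ 2)) := by
  have h1r : 1 - r ≠ 0 := sub_ne_zero.2 fun h => by simp [← h] at hr
  have hs := fun j => summable_pow_mul_geometric_of_norm_lt_one (R := ℝ) j hr
  have h0 := tendsto_partialMoment_cesaroWeight (hs 0) (hs 1)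
  have h1 := tendsto_partialMoment_cesaroWeight (hs 1) (hs 2)
  have h2 := tendsto_partialMoment_cesaroWeight (hs 2) (hs 3)
  simp only [pow_zero, one_mul, pow_one, tsum_geometric_of_norm_lt_one hr,
    tsum_coe_mul_geometric_of_norm_lt_one hr, tsum_sq_mul_geometric_of_norm_lt_one hr] at h0 h1 h2
  rw [show r / (1 - r) ^ 2 = (r * (1 + r) / (1 - r) ^ 3 * (1 - r)⁻¹ - (r / (1 - r) ^ 2) ^ 2)
      / (1 - r)⁻¹ ^ 2 by field_simp; ring]
  exact ((h2.mul h0).sub (h1.pow 2)).div (h0.pow 2) (by simpa using h1r)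

lemma partialVariance_eq_cesaroWeight {t : ℝ} (ht : t ≠ 0) (n : ℕ) :
    partialVariance (fun k => ((k : ℝ) + 1) * t ^ k) n
      = partialVariance (cesaroWeight (t⁻¹ ^ ·) n) n := by
  rw [← partialVariance_reflect,
    ← partialVariance_const_mul (w := cesaroWeight (t⁻¹ ^ ·) n) (c := (n + 1) * t ^ n)
      (by positivity)]
  refine partialVariance_congr fun i hi => ?_
  rw [cesaroWeight, Nat.cast_sub hi, pow_sub₀ t ht hi, inv_pow]
  field_simp
  ring

lemma bergPoly_sq (k : ℕ) (x : ℝ) : bergPoly k x ^ 2 = (k + 1) / π * (x ^ 2) ^ k := by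
  rw [bergPoly, mul_pow, sq_sqrt (by positivity), ← pow_mul, ← pow_mul, mul_comm k]

lemma mul_deriv_bergPoly (k : ℕ) (x : ℝ) : x * deriv (bergPoly k) x = k * bergPoly k x := by
  have : bergPoly k = fun y => Real.sqrt ((k + 1) / π) * y ^ k := rfl
  rw [this, deriv_const_mul_field, deriv_pow_field]
  cases k with
  | zero => simp
  | succ k => simp only [Nat.add_sub_cancel, pow_succ]; ring

section Kernels

variable (n : ℕ) (x : ℝ)

lemma bergK_eq : bergK n x = partialMoment (fun k => ((k : ℝ) + 1) * (x ^ 2) ^ k) n 0 / π := by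
  simp only [bergK, partialMoment, sum_div, bergPoly_sq]
  exact sum_congr rfl fun k _ => by ring

lemma mul_bergK01_eq :
    x * bergK01 n x = partialMoment (fun k => ((k : ℝ) + 1) * (x ^ 2) ^ k) n 1 / π := by
  simp only [bergK01, partialMoment, mul_sum, sum_div]
  refine sum_congr rfl fun k _ => ?_
  linear_combination bergPoly k x * mul_deriv_bergPoly k x + k * bergPoly_sq k x

lemma sq_mul_bergK11_eq :
    x ^ 2 * bergK11 n x = partialMoment (fun k => ((k : ℝ) + 1) * (x ^ 2) ^ k) n 2 / π := by
  simp only [bergK11, partialMoment, mul_sum, sum_div]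
  refine sum_congr rfl fun k _ => ?_
  linear_combination (x * deriv (bergPoly k) x + k * bergPoly k x) * mul_deriv_bergPoly k x
    + k ^ 2 * bergPoly_sq k x

lemma bergKcal_eq (hx : x ≠ 0) :
    bergKcal n x = √(partialVariance (fun k => ((k : ℝ) + 1) * (x ^ 2) ^ k) n / x ^ 2) := by
  set w : ℕ → ℝ := fun k => ((k : ℝ) + 1) * (x ^ 2) ^ k
  have hM0 : 0 < partialMoment w n 0 :=
    sum_pos (fun k _ => by positivity) nonempty_range_add_one
  have hK : bergK n x = partialMoment w n 0 / π := bergK_eq n x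
  have hK11 : bergK11 n x = partialMoment w n 2 / π / x ^ 2 := by
    rw [← sq_mul_bergK11_eq, mul_div_cancel_left₀ _ (pow_ne_zero 2 hx)]
  have hK01 : bergK01 n x = partialMoment w n 1 / π / x := by
    rw [← mul_bergK01_eq, mul_div_cancel_left₀ _ hx]
  have hdisc : bergK11 n x * bergK n x - bergK01 n x ^ 2
      = (partialMoment w n 0 / π) ^ 2 * (partialVariance w n / x ^ 2) := by
    have := hM0.ne'
    rw [hK11, hK01, hK, partialVariance]
    field_simp
  rw [bergKcal, hdisc, sqrt_mul (sq_nonneg _), sqrt_sq (by positivity), hK,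
    mul_div_cancel_left₀ _ (by positivity)]

end Kernels

theorem stmt_18 (x : ℝ) (hx : 1 < |x|) :
    Tendsto (fun n : ℕ => bergKcal n x) atTop (nhds (1 / (x ^ 2 - 1))) := by
  have ht : 1 < x ^ 2 := (one_lt_sq_iff_one_lt_abs x).2 hx
  have hx0 : x ≠ 0 := by rintro rfl; norm_num at ht
  have hr : ‖(x ^ 2)⁻¹‖ < 1 := by
    rw [norm_inv, Real.norm_eq_abs, abs_of_pos (by positivity)]
    exact inv_lt_one_of_one_lt₀ ht
  have hlim := ((tendsto_partialVariance_cesaroWeight_geometric hr).div_const (x ^ 2)).sqrt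
  simp_rw [bergKcal_eq _ _ hx0, partialVariance_eq_cesaroWeight (pow_ne_zero 2 hx0)]
  convert hlim using 2
  rw [show (x ^ 2)⁻¹ / (1 - (x ^ 2)⁻¹) ^ 2 / x ^ 2 = (1 / (x ^ 2 - 1)) ^ 2 by
    field_simp, sqrt_sq (one_div_nonneg.2 (sub_nonneg.2 ht.le))]
end

section
/- For k = 0, 1, 2, ..., let p_k(x) = √((k+1)/π) x^k, and for n ∈ ℕ define K_n(x) = Σ_{k=0}^n p_k(x)², K01_n(x) = Σ_{k=0}^n p_k(x) p_k'(x), K11_n(x) = Σ_{k=0}^n p_k'(x)², and 𝒦_n(x) = √(K11_n(x) K_n(x) − K01_n(x)²) / K_n(x). Then for every n ∈ ℕ and for x = 1 and x = −1, one has K_n(x) = (n+1)(n+2)/(2π), K11_n(x) = n(n+1)(n+2)(3n+1)/(12π), K01_n(x)·x = n(n+1)(n+2)/(3π), and consequently 𝒦_n(1) = 𝒦_n(−1) = (1/3)√(n(n+3)/2). -/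
open Finset Real

lemma deriv_bergPoly (k : ℕ) (x : ℝ) :
    deriv (bergPoly k) x = Real.sqrt ((k + 1) / π) * (k * x ^ (k - 1)) := by
  have : bergPoly k = fun y : ℝ => Real.sqrt ((k + 1) / π) * y ^ k := rfl
  rw [this, deriv_const_mul_field, deriv_pow_field]

lemma sumA (n : ℕ) : ∑ k ∈ Finset.range (n + 1), ((k : ℝ) + 1) = (n + 1) * (n + 2) / 2 := by
  induction n with
  | zero => norm_num
  | succ m ih => rw [Finset.sum_range_succ, ih]; push_cast; ring

lemma sumB (n : ℕ) : ∑ k ∈ Finset.range (n + 1), (k : ℝ) ^ 2 * ((k : ℝ) + 1)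
    = (n : ℝ) * (n + 1) * (n + 2) * (3 * n + 1) / 12 := by
  induction n with
  | zero => norm_num
  | succ m ih => rw [Finset.sum_range_succ, ih]; push_cast; ring

lemma sumC (n : ℕ) : ∑ k ∈ Finset.range (n + 1), (k : ℝ) * ((k : ℝ) + 1)
    = (n : ℝ) * (n + 1) * (n + 2) / 3 := by
  induction n with
  | zero => norm_num
  | succ m ih => rw [Finset.sum_range_succ, ih]; push_cast; ring

theorem stmt_19 (n : ℕ) :
    ∀ x : ℝ, (x = 1 ∨ x = -1) →
      bergK n x = (n + 1) * (n + 2) / (2 * π) ∧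
      bergK11 n x = n * (n + 1) * (n + 2) * (3 * n + 1) / (12 * π) ∧
      bergK01 n x * x = n * (n + 1) * (n + 2) / (3 * π) ∧
      bergKcal n x = (1 / 3) * Real.sqrt (n * (n + 3) / 2) := by
  intro x hx
  have hx2 : x ^ 2 = 1 := by rcases hx with h | h <;> rw [h] <;> norm_num
  have hpi : (0 : ℝ) < π := Real.pi_pos
  have hc : ∀ k : ℕ, Real.sqrt ((k + 1) / π) ^ 2 = ((k : ℝ) + 1) / π := by
    intro k; exact Real.sq_sqrt (by positivity)
  have hxk : ∀ m : ℕ, (x ^ m) ^ 2 = 1 := by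
    intro m; rw [← pow_mul, mul_comm, pow_mul, hx2, one_pow]
  have hK : bergK n x = (n + 1) * (n + 2) / (2 * π) := by
    unfold bergK
    have : ∀ k ∈ Finset.range (n + 1),
        (bergPoly k x) ^ 2 = ((k : ℝ) + 1) / π := by
      intro k _
      unfold bergPoly
      rw [mul_pow, hc, hxk, mul_one]
    rw [Finset.sum_congr rfl this, ← Finset.sum_div, sumA]
    ring
  have hK11 : bergK11 n x = n * (n + 1) * (n + 2) * (3 * n + 1) / (12 * π) := by
    unfold bergK11
    have : ∀ k ∈ Finset.range (n + 1),
        (deriv (bergPoly k) x) ^ 2 = (k : ℝ) ^ 2 * ((k : ℝ) + 1) / π := by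
      intro k _
      rw [deriv_bergPoly, mul_pow, hc, mul_pow, hxk, mul_one]
      ring
    rw [Finset.sum_congr rfl this, ← Finset.sum_div, sumB]
    ring
  have hK01 : bergK01 n x * x = n * (n + 1) * (n + 2) / (3 * π) := by
    unfold bergK01
    rw [Finset.sum_mul]
    have : ∀ k ∈ Finset.range (n + 1),
        bergPoly k x * deriv (bergPoly k) x * x = (k : ℝ) * ((k : ℝ) + 1) / π := by
      intro k _
      rw [deriv_bergPoly]
      unfold bergPoly
      match k with
      | 0 => simp
      | m + 1 =>
        have h1 : x ^ (m + 1) * x ^ (m + 1 - 1) * x = 1 := by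
          have : x ^ (m + 1) * x ^ m * x = (x ^ (m + 1)) ^ 2 := by ring
          rw [Nat.add_sub_cancel, this, hxk]
        have e : Real.sqrt ((↑(m + 1) + 1) / π) * x ^ (m + 1) *
            (Real.sqrt ((↑(m + 1) + 1) / π) * (↑(m + 1) * x ^ (m + 1 - 1))) * x
            = Real.sqrt ((↑(m + 1) + 1) / π) ^ 2 *
              (((m : ℝ) + 1) * (x ^ (m + 1) * x ^ (m + 1 - 1) * x)) := by
          push_cast; ring
        rw [e, h1, hc, mul_one]; push_cast; ring
    rw [Finset.sum_congr rfl this, ← Finset.sum_div, sumC]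
    ring
  refine ⟨hK, hK11, hK01, ?_⟩
  unfold bergKcal
  have hK01sq : (bergK01 n x) ^ 2 = (n * (n + 1) * (n + 2) / (3 * π)) ^ 2 := by
    rw [← hK01, mul_pow, hx2, mul_one]
  have hs : Real.sqrt ((n : ℝ) * (n + 3) / 2) ^ 2 = (n : ℝ) * (n + 3) / 2 :=
    Real.sq_sqrt (by positivity)
  have hinner : bergK11 n x * bergK n x - (bergK01 n x) ^ 2
      = (bergK n x * ((1 / 3) * Real.sqrt ((n : ℝ) * (n + 3) / 2))) ^ 2 := by
    rw [hK11, hK01sq, hK, mul_pow, mul_pow, hs]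
    field_simp
    ring
  have hKpos : 0 < bergK n x := by rw [hK]; positivity
  rw [hinner, Real.sqrt_sq (by positivity), mul_div_cancel_left₀ _ (ne_of_gt hKpos)]
end
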